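/- arXiv:2512.12381 — 2 statements merged into one kernel-verified Lean document; each statement's English description precedes it below -/
import Mathlib

section
/- Under repeated application of the α-tilting map T_α(P)(s) = P(s)^α/∑_t P(t)^α with α > 1, if P has a unique state s* of maximal probability, then the iterates T_α^n(P) converge to the point mass at s*, and in particular H(T_α^n(P)) → 0 as n → ∞. -/
open Real Finset Filter

noncomputable def shannonEntropy {S : Type*} [Fintype S] (p : S → ℝ) : ℝ :=
  ∑ s, Real.negMulLog (p s)

noncomputable def tilt {S : Type*} [Fintype S] (α : ℝ) (P : S → ℝ) : S → ℝ :=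
  fun s => P s ^ α / ∑ t, P t ^ α

lemma tilt_iterate {S : Type*} [Fintype S] [Nonempty S] (P : S → ℝ) (hpos : ∀ s, 0 < P s)
    (hsum : ∑ s, P s = 1) (α : ℝ) (hα : 0 < α) (n : ℕ) :
    (tilt α)^[n] P = fun s => P s ^ (α ^ n) / ∑ t, P t ^ (α ^ n) := by
  induction n with
  | zero =>
    simp only [Function.iterate_zero, id, pow_zero, Real.rpow_one, hsum, div_one]
  | succ n ih =>
    have hD : (0:ℝ) < ∑ t, P t ^ (α ^ n) :=
      Finset.sum_pos (fun t _ => Real.rpow_pos_of_pos (hpos t) _) Finset.univ_nonempty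
    rw [Function.iterate_succ_apply', ih]
    funext s
    simp only [tilt]
    have key : ∀ u : S, (P u ^ (α ^ n) / ∑ t, P t ^ (α ^ n)) ^ α
        = P u ^ (α ^ (n+1)) / (∑ t, P t ^ (α ^ n)) ^ α := by
      intro u
      rw [Real.div_rpow (Real.rpow_pos_of_pos (hpos u) _).le hD.le]
      congr 1
      rw [← Real.rpow_mul (hpos u).le, pow_succ]
    simp only [key]
    rw [← Finset.sum_div, div_div_div_comm, div_self (Real.rpow_pos_of_pos hD α).ne', div_one]

lemma ratio_tendsto (r : ℝ) (hr0 : 0 < r) (hr1 : r ≤ 1) (α : ℝ) (hα : 1 < α) :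
    Tendsto (fun n : ℕ => r ^ (α ^ n)) atTop (nhds (if r = 1 then (1:ℝ) else 0)) := by
  rcases eq_or_lt_of_le hr1 with h1 | h1
  · subst h1
    simpa using tendsto_const_nhds
  · rw [if_neg h1.ne]
    exact (tendsto_rpow_atTop_of_base_lt_one r (by linarith) h1).comp
      (tendsto_pow_atTop_atTop_of_one_lt hα)

theorem iterated_tilting_converges_to_point_mass {S : Type*} [Fintype S] [DecidableEq S]
    (P : S → ℝ) (hpos : ∀ s, 0 < P s) (hsum : ∑ s, P s = 1)
    (sstar : S) (hmax : ∀ s, s ≠ sstar → P s < P sstar)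
    (α : ℝ) (hα : 1 < α) :
    (∀ s, Tendsto (fun n => ((tilt α)^[n] P) s) atTop
        (nhds (if s = sstar then (1:ℝ) else 0))) ∧
    Tendsto (fun n => shannonEntropy ((tilt α)^[n] P)) atTop (nhds 0) := by
  have : Nonempty S := ⟨sstar⟩
  have hstar := hpos sstar
  -- ratios
  set r : S → ℝ := fun s => P s / P sstar with hr
  have hr0 : ∀ s, 0 < r s := fun s => div_pos (hpos s) hstar
  have hr1 : ∀ s, r s ≤ 1 := by
    intro s
    rcases eq_or_ne s sstar with rfl | h
    · simp [hr, div_self hstar.ne']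
    · exact le_of_lt (div_lt_one hstar |>.mpr (hmax s h))
  have hreq : ∀ s, r s = 1 ↔ s = sstar := by
    intro s
    constructor
    · intro h
      by_contra hs
      have := hmax s hs
      have : r s < 1 := (div_lt_one hstar).mpr this
      simp [h] at this
    · rintro rfl; simp [hr, div_self hstar.ne']
  -- key form of iterate
  have hform : ∀ n s, ((tilt α)^[n] P) s = r s ^ (α ^ n) / ∑ t, r t ^ (α ^ n) := by
    intro n s
    rw [tilt_iterate P hpos hsum α (by linarith) n]
    have hDn : (0:ℝ) < (P sstar) ^ (α ^ n) := Real.rpow_pos_of_pos hstar _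
    have key : ∀ u : S, r u ^ (α ^ n) = P u ^ (α ^ n) / P sstar ^ (α ^ n) := fun u =>
      Real.div_rpow (hpos u).le hstar.le _
    simp only [key]
    rw [← Finset.sum_div, div_div_div_comm, div_self hDn.ne', div_one]
  -- pointwise convergence
  have hnum : ∀ s, Tendsto (fun n : ℕ => r s ^ (α ^ n)) atTop
      (nhds (if s = sstar then (1:ℝ) else 0)) := by
    intro s
    have := ratio_tendsto (r s) (hr0 s) (hr1 s) α hα
    simp only [hreq] at this
    exact this
  have hden : Tendsto (fun n : ℕ => ∑ t, r t ^ (α ^ n)) atTop (nhds 1) := by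
    have : Tendsto (fun n : ℕ => ∑ t, r t ^ (α ^ n)) atTop
        (nhds (∑ t, if t = sstar then (1:ℝ) else 0)) :=
      tendsto_finset_sum _ (fun t _ => hnum t)
    simpa using this
  have hpt : ∀ s, Tendsto (fun n => ((tilt α)^[n] P) s) atTop
      (nhds (if s = sstar then (1:ℝ) else 0)) := by
    intro s
    have := (hnum s).div hden one_ne_zero
    simp only [div_one] at this
    exact this.congr (fun n => (hform n s).symm)
  refine ⟨hpt, ?_⟩
  -- entropy convergence
  have : Tendsto (fun n => shannonEntropy ((tilt α)^[n] P)) atTop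
      (nhds (∑ s, Real.negMulLog (if s = sstar then (1:ℝ) else 0))) := by
    apply tendsto_finset_sum
    intro s _
    exact (Real.continuous_negMulLog.tendsto _).comp (hpt s)
  convert this using 2
  rw [Finset.sum_eq_zero]
  intro s _
  by_cases h : s = sstar <;> simp [h]
end

section
/- Stability of the uniform point at weak feedback in the two-state model: for f(x) = (1-β)·x^α/(x^α+(1-x)^α) + β/2, the derivative at the symmetric fixed point is f'(1/2) = (1-β)·α; hence x = 1/2 is a locally attracting fixed point if (1-β)α < 1 and repelling if (1-β)α > 1, giving the critical threshold α_c = 1/(1-β). -/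
/-!
At the symmetric point both `x ^ α` and `(1 - x) ^ α` equal `(1 / 2) ^ α` and their derivatives
cancel in the denominator, so the quotient rule gives `f'(1/2) = (1 - β) * α`. Linearisation
then shows that near a fixed point the map shrinks (resp. stretches) distances to it by a
factor `c` with `|f'| < c < 1` (resp. `1 < c < |f'|`), so orbits converge geometrically
(resp. are pushed out of every small ball).
-/

open Real Filter Topology

section Linearisation

variable {𝕜 F : Type*} [NontriviallyNormedField 𝕜] [NormedAddCommGroup F] [NormedSpace 𝕜 F]
  {f : 𝕜 → F} {f' : F} {x : 𝕜} {c : ℝ}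

theorem HasDerivAt.eventually_norm_sub_le (hf : HasDerivAt f f' x) (hc : ‖f'‖ < c) :
    ∀ᶠ y in 𝓝 x, ‖f y - f x‖ ≤ c * ‖y - x‖ := by
  filter_upwards [(hasDerivAt_iff_isLittleO.mp hf).def (sub_pos.mpr hc)] with y hy
  calc ‖f y - f x‖ ≤ ‖f y - f x - (y - x) • f'‖ + ‖(y - x) • f'‖ := norm_le_norm_sub_add _ _
    _ ≤ (c - ‖f'‖) * ‖y - x‖ + ‖y - x‖ * ‖f'‖ := add_le_add hy (norm_smul_le _ _)
    _ = c * ‖y - x‖ := by ring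

theorem HasDerivAt.eventually_le_norm_sub (hf : HasDerivAt f f' x) (hc : c < ‖f'‖) :
    ∀ᶠ y in 𝓝 x, c * ‖y - x‖ ≤ ‖f y - f x‖ := by
  filter_upwards [(hasDerivAt_iff_isLittleO.mp hf).def (sub_pos.mpr hc)] with y hy
  calc c * ‖y - x‖ = ‖y - x‖ * ‖f'‖ - (‖f'‖ - c) * ‖y - x‖ := by ring
    _ ≤ ‖(y - x) • f'‖ - ‖f y - f x - (y - x) • f'‖ := by rw [norm_smul]; linarith
    _ ≤ ‖f y - f x‖ := by
      have := norm_sub_le (f y - f x) (f y - f x - (y - x) • f')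
      rw [sub_sub_cancel] at this
      linarith

end Linearisation

section Iteration

variable {X : Type*} [PseudoMetricSpace X] {f : X → X} {p x : X} {c δ : ℝ}

theorem dist_iterate_le_pow_mul (hc0 : 0 ≤ c) (hc1 : c ≤ 1)
    (hf : ∀ y, dist y p < δ → dist (f y) p ≤ c * dist y p) (hx : dist x p < δ) (n : ℕ) :
    dist (f^[n] x) p ≤ c ^ n * dist x p := by
  induction n with
  | zero => simp
  | succ n ih =>
    have hn : dist (f^[n] x) p < δ :=
      ih.trans_lt <| (mul_le_of_le_one_left dist_nonneg (pow_le_one₀ hc0 hc1)).trans_lt hx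
    rw [Function.iterate_succ_apply', pow_succ', mul_assoc]
    exact (hf _ hn).trans (mul_le_mul_of_nonneg_left ih hc0)

theorem tendsto_iterate_of_dist_le_mul (hc0 : 0 ≤ c) (hc1 : c < 1)
    (hf : ∀ y, dist y p < δ → dist (f y) p ≤ c * dist y p) (hx : dist x p < δ) :
    Tendsto (fun n => f^[n] x) atTop (𝓝 p) := by
  refine tendsto_iff_dist_tendsto_zero.mpr <|
    squeeze_zero (fun _ => dist_nonneg) (dist_iterate_le_pow_mul hc0 hc1.le hf hx) ?_
  simpa using (tendsto_pow_atTop_nhds_zero_of_lt_one hc0 hc1).mul_const (dist x p)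

theorem exists_le_dist_iterate_of_mul_le_dist (hc : 1 < c)
    (hf : ∀ y, dist y p < δ → c * dist y p ≤ dist (f y) p) (hx : 0 < dist x p) :
    ∃ n, δ ≤ dist (f^[n] x) p := by
  by_contra! hstay
  have hgrow : ∀ n, c ^ n * dist x p ≤ dist (f^[n] x) p := by
    intro n
    induction n with
    | zero => simp
    | succ n ih =>
      rw [Function.iterate_succ_apply', pow_succ', mul_assoc]
      exact (mul_le_mul_of_nonneg_left ih (by linarith)).trans (hf _ (hstay n))
  obtain ⟨n, hn⟩ :=
    (((tendsto_pow_atTop_atTop_of_one_lt hc).atTop_mul_const hx).eventually_ge_atTop δ).exists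
  exact (hn.trans (hgrow n)).not_gt (hstay n)

end Iteration

section FixedPoint

variable {𝕜 : Type*} [NontriviallyNormedField 𝕜] {f : 𝕜 → 𝕜} {f' p : 𝕜}

theorem HasDerivAt.exists_tendsto_iterate_of_norm_lt_one (hf : HasDerivAt f f' p)
    (hfp : f p = p) (hf' : ‖f'‖ < 1) :
    ∃ δ > 0, ∀ x, dist x p < δ → Tendsto (fun n => f^[n] x) atTop (𝓝 p) := by
  obtain ⟨c, hf'c, hc1⟩ := exists_between hf'
  obtain ⟨δ, hδ, hcontract⟩ := Metric.eventually_nhds_iff.mp (hf.eventually_norm_sub_le hf'c)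
  refine ⟨δ, hδ, fun x hx => tendsto_iterate_of_dist_le_mul ((norm_nonneg _).trans hf'c.le) hc1
    (fun y hy => ?_) hx⟩
  simpa only [dist_eq_norm, hfp] using hcontract hy

theorem HasDerivAt.exists_le_dist_iterate_of_one_lt_norm (hf : HasDerivAt f f' p)
    (hfp : f p = p) (hf' : 1 < ‖f'‖) :
    ∃ δ > 0, ∀ x, x ≠ p → ∃ n, δ ≤ dist (f^[n] x) p := by
  obtain ⟨c, hc1, hcf'⟩ := exists_between hf'
  obtain ⟨δ, hδ, hexpand⟩ := Metric.eventually_nhds_iff.mp (hf.eventually_le_norm_sub hcf')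
  refine ⟨δ, hδ, fun x hx => exists_le_dist_iterate_of_mul_le_dist hc1 (fun y hy => ?_)
    (dist_pos.mpr hx)⟩
  simpa only [dist_eq_norm, hfp] using hexpand hy

end FixedPoint

theorem hasDerivAt_rpow_div_rpow_add_rpow_half (α : ℝ) :
    HasDerivAt (fun x : ℝ => x ^ α / (x ^ α + (1 - x) ^ α)) α (1 / 2) := by
  have hhalf : (1 : ℝ) - 1 / 2 = 1 / 2 := by norm_num
  have hpow : HasDerivAt (fun x : ℝ => x ^ α) (α * (1 / 2) ^ (α - 1)) (1 / 2) :=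
    hasDerivAt_rpow_const (Or.inl (by norm_num))
  have hreflect : HasDerivAt (fun x : ℝ => (1 - x) ^ α) (-(α * (1 / 2) ^ (α - 1))) (1 / 2) := by
    refine (((hasDerivAt_id (1 / 2 : ℝ)).const_sub 1).rpow_const (p := α)
      (Or.inl (by norm_num))).congr_deriv ?_
    rw [id, hhalf]; ring
  have hden : (1 / 2 : ℝ) ^ α + (1 - 1 / 2) ^ α ≠ 0 := by rw [hhalf]; positivity
  refine (hpow.div (hpow.add hreflect) hden).congr_deriv ?_
  have h2 : (1 / 2 : ℝ) ^ (α - 1) = 2 * (1 / 2) ^ α := by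
    rw [rpow_sub (by norm_num), rpow_one]; ring
  have hpos : (0 : ℝ) < (1 / 2) ^ α := by positivity
  rw [Pi.add_apply, hhalf, h2]
  field_simp
  ring

theorem uniform_point_stability_threshold_general (α β : ℝ) (hα : 0 < α)
    (hβ1 : β < 1)
    (f : ℝ → ℝ)
    (hf : ∀ x, f x = (1 - β) * (x ^ α / (x ^ α + (1 - x) ^ α)) + β / 2) :
    HasDerivAt f ((1 - β) * α) (1/2) ∧
    ((1 - β) * α < 1 →
      ∃ δ > 0, ∀ x : ℝ, |x - 1/2| < δ →
        Tendsto (fun n => f^[n] x) atTop (nhds (1/2))) ∧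
    (1 < (1 - β) * α →
      ∃ δ > 0, ∀ x : ℝ, x ≠ 1/2 → |x - 1/2| < δ →
        ∃ n : ℕ, δ ≤ |f^[n] x - 1/2|) := by
  obtain rfl : f = fun x => (1 - β) * (x ^ α / (x ^ α + (1 - x) ^ α)) + β / 2 := funext hf
  have hderiv := ((hasDerivAt_rpow_div_rpow_add_rpow_half α).const_mul (1 - β)).add_const (β / 2)
  have hfix : (1 - β) * ((1 / 2 : ℝ) ^ α / ((1 / 2) ^ α + (1 - 1 / 2) ^ α)) + β / 2 = 1 / 2 := by
    have hpos : (0 : ℝ) < (1 / 2) ^ α := by positivity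
    rw [show (1 : ℝ) - 1 / 2 = 1 / 2 by norm_num]
    field_simp
    ring
  have hnorm : ‖(1 - β) * α‖ = (1 - β) * α := by
    rw [Real.norm_eq_abs, abs_of_pos (mul_pos (sub_pos.mpr hβ1) hα)]
  refine ⟨hderiv, fun hlt => ?_, fun hgt => ?_⟩
  · obtain ⟨δ, hδ, hconv⟩ := hderiv.exists_tendsto_iterate_of_norm_lt_one hfix (by rwa [hnorm])
    exact ⟨δ, hδ, fun x hx => hconv x (by rwa [Real.dist_eq])⟩
  · obtain ⟨δ, hδ, hexit⟩ := hderiv.exists_le_dist_iterate_of_one_lt_norm hfix (by rwa [hnorm])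
    exact ⟨δ, hδ, fun x hx _ => by simpa only [Real.dist_eq] using hexit x hx⟩

theorem uniform_point_stability_threshold (α β : ℝ) (hα : 0 < α)
    (hβ0 : 0 < β) (hβ1 : β < 1)
    (f : ℝ → ℝ)
    (hf : ∀ x, f x = (1 - β) * (x ^ α / (x ^ α + (1 - x) ^ α)) + β / 2) :
    HasDerivAt f ((1 - β) * α) (1/2) ∧
    ((1 - β) * α < 1 →
      ∃ δ > 0, ∀ x : ℝ, |x - 1/2| < δ →
        Tendsto (fun n => f^[n] x) atTop (nhds (1/2))) ∧
    (1 < (1 - β) * α →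
      ∃ δ > 0, ∀ x : ℝ, x ≠ 1/2 → |x - 1/2| < δ →
        ∃ n : ℕ, δ ≤ |f^[n] x - 1/2|) :=
  uniform_point_stability_threshold_general α β hα hβ1 f hf
end
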